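/- Let L_1, L_2, L_3 be convex subsets of the graph group G_F with L_i ∩ L_j ≠ ∅ for all i, j ∈ {1,2,3}. Then L_1 ∩ L_2 ∩ L_3 ≠ ∅. -/

import Mathlib

open Pointwise

namespace GraphGroupPaper

/-- The set of commutator relators: `gᵢ` and `gⱼ` commute for every pair of distinct
`i, j` with `{i,j} ∉ F`. -/
def Rels (k : ℕ) (F : Set (Sym2 (Fin k))) : Set (FreeGroup (Fin k)) :=
  {w | ∃ i j : Fin k, i ≠ j ∧ s(i, j) ∉ F ∧
      w = FreeGroup.of i * FreeGroup.of j * (FreeGroup.of i)⁻¹ * (FreeGroup.of j)⁻¹}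

/-- The graph group `G_F` with generators `g₁, …, g_k` and relations `gᵢgⱼ = gⱼgᵢ`
for all distinct `i, j` with `{i,j} ∉ F`. -/
abbrev Grp (k : ℕ) (F : Set (Sym2 (Fin k))) := PresentedGroup (Rels k F)

/-- The generator `gᵢ` of the graph group. -/
def gen (k : ℕ) (F : Set (Sym2 (Fin k))) (i : Fin k) : Grp k F :=
  PresentedGroup.of i

/-- The group element corresponding to a symbol: `(i, true)` stands for `gᵢ`,
`(i, false)` stands for `gᵢ⁻¹`. -/
def sym (k : ℕ) (F : Set (Sym2 (Fin k))) (α : Fin k × Bool) : Grp k F :=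
  if α.2 then gen k F α.1 else (gen k F α.1)⁻¹

/-- The product of the word `l` of symbols, as an element of the graph group. -/
def wordProd (k : ℕ) (F : Set (Sym2 (Fin k))) (l : List (Fin k × Bool)) : Grp k F :=
  (l.map (sym k F)).prod

/-- `|x|` : the length of a shortest word in the symbols representing `x`. -/
noncomputable def len {k : ℕ} {F : Set (Sym2 (Fin k))} (x : Grp k F) : ℕ :=
  sInf {n | ∃ l : List (Fin k × Bool), wordProd k F l = x ∧ l.length = n}

/-- The partial order on `G_F`:  `x ≤ y` iff `|y| = |x| + |x⁻¹y|`. -/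
def le {k : ℕ} {F : Set (Sym2 (Fin k))} (x y : Grp k F) : Prop :=
  len y = len x + len (x⁻¹ * y)

/-- `m` is the meet `x ∧ y` (greatest lower bound w.r.t. `le`). -/
def IsMeet {k : ℕ} {F : Set (Sym2 (Fin k))} (x y m : Grp k F) : Prop :=
  le m x ∧ le m y ∧ ∀ w, le w x → le w y → le w m

/-- `j` is the (finite) join `x ∨ y` (least upper bound w.r.t. `le`);
`x ∨ y` is finite iff such a `j` exists. -/
def IsJoin {k : ℕ} {F : Set (Sym2 (Fin k))} (x y j : Grp k F) : Prop :=
  le x j ∧ le y j ∧ ∀ w, le x w → le y w → le j w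

/-- `j` is the (finite) join of the set `S`. -/
def IsJoinSet {k : ℕ} {F : Set (Sym2 (Fin k))} (S : Set (Grp k F)) (j : Grp k F) : Prop :=
  (∀ s ∈ S, le s j) ∧ ∀ w, (∀ s ∈ S, le s w) → le j w

/-- `y` is a segment of `a` if `a = x·y·z` for some `x, z`. -/
def Segment {k : ℕ} {F : Set (Sym2 (Fin k))} (y a : Grp k F) : Prop :=
  ∃ x z, a = x * y * z ∧ len a = len x + len y + len z

/-- The left-invariant metric `dist(x,y) = |x⁻¹y|`. -/
noncomputable def dist {k : ℕ} {F : Set (Sym2 (Fin k))} (x y : Grp k F) : ℕ :=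
  len (x⁻¹ * y)

/-- A nonempty set `L` is convex if `x, z ∈ L` and `dist(x,y) + dist(y,z) = dist(x,z)`
imply `y ∈ L`. -/
def ConvexSet {k : ℕ} {F : Set (Sym2 (Fin k))} (L : Set (Grp k F)) : Prop :=
  L.Nonempty ∧ ∀ x z y : Grp k F, x ∈ L → z ∈ L →
    dist x y + dist y z = dist x z → y ∈ L

/-- An ideal: nonempty, downward closed, and closed under finite joins. -/
def IdealSet {k : ℕ} {F : Set (Sym2 (Fin k))} (I : Set (Grp k F)) : Prop :=
  I.Nonempty ∧ (∀ x ∈ I, ∀ y, le y x → y ∈ I) ∧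
    (∀ x ∈ I, ∀ y ∈ I, ∀ j, IsJoin x y j → j ∈ I)

/-- `H` is closed if both `H` and `H⁻¹` are ideals. -/
def ClosedSet {k : ℕ} {F : Set (Sym2 (Fin k))} (H : Set (Grp k F)) : Prop :=
  IdealSet H ∧ IdealSet H⁻¹

/-- `m` is a minimal element of `S` w.r.t. `le`. -/
def MinimalIn {k : ℕ} {F : Set (Sym2 (Fin k))} (S : Set (Grp k F)) (m : Grp k F) : Prop :=
  m ∈ S ∧ ∀ x ∈ S, le x m → x = m

/-- `l` is a reduced (i.e. shortest) word representing `x`. -/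
def MinWord {k : ℕ} {F : Set (Sym2 (Fin k))} (x : Grp k F) (l : List (Fin k × Bool)) : Prop :=
  wordProd k F l = x ∧ l.length = len x

open Classical in
/-- `#_α(x)`: the number of occurrences of the symbol `α` (not counting `α⁻¹`)
in a reduced word representing `x`. -/
noncomputable def symCount {k : ℕ} {F : Set (Sym2 (Fin k))} (α : Fin k × Bool)
    (x : Grp k F) : ℕ :=
  if h : ∃ l, MinWord x l then h.choose.count α else 0

/-- The symbol `α` occurs in `x`. -/
def Occurs {k : ℕ} {F : Set (Sym2 (Fin k))} (α : Fin k × Bool) (x : Grp k F) : Prop :=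
  0 < symCount α x

/-- `α` is a maximal symbol of `x`, i.e. `xα⁻¹ ≤ x`. -/
def MaxSym {k : ℕ} {F : Set (Sym2 (Fin k))} (α : Fin k × Bool) (x : Grp k F) : Prop :=
  le (x * (sym k F α)⁻¹) x

/-- A peak: an element with precisely one maximal symbol. -/
def IsPeak {k : ℕ} {F : Set (Sym2 (Fin k))} (p : Grp k F) : Prop :=
  ∃! α : Fin k × Bool, MaxSym α p

/-- An `α`-peak: a peak whose unique maximal symbol is `α`. -/
def AlphaPeak {k : ℕ} {F : Set (Sym2 (Fin k))} (α : Fin k × Bool) (p : Grp k F) : Prop :=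
  MaxSym α p ∧ ∀ β, MaxSym β p → β = α

/-- The set of generator indices occurring in `b`. -/
def Support {k : ℕ} {F : Set (Sym2 (Fin k))} (b : Grp k F) : Set (Fin k) :=
  {i | Occurs (i, true) b ∨ Occurs (i, false) b}

/-- `b` is connected: the generators occurring in `b` induce a connected subgraph of
the graph `([k], F)`. -/
def Conn {k : ℕ} {F : Set (Sym2 (Fin k))} (b : Grp k F) : Prop :=
  (SimpleGraph.induce (Support b) (SimpleGraph.fromEdgeSet F)).Connected

/-- `b` is cyclically reduced: `b ∧ b⁻¹ = 1`. -/
def CycRed {k : ℕ} {F : Set (Sym2 (Fin k))} (b : Grp k F) : Prop :=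
  IsMeet b b⁻¹ 1

/-!
Helly's property holds in any median space: if `a ∈ L₁ ∩ L₂`, `b ∈ L₁ ∩ L₃`, `c ∈ L₂ ∩ L₃`,
a median of `a, b, c` lies on a geodesic between any two of them, hence in all three convex sets.

Medians exist in `G_F` because reduced words are unique up to swapping adjacent commuting
letters. This is seen by letting `G_F` act on braid classes of reduced words, a letter acting by
entering on the left and moving right past the letters it commutes with until it cancels or is
blocked. Consequently, if `x` and `y` have no common first letter, then reduced words for `x⁻¹`
and `y` concatenate to a reduced word, so `|x⁻¹y| = |x| + |y|` and `1` is a median of `1, x, y`;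
otherwise strip a common first letter and induct.
-/

section

variable {k : ℕ} {F : Set (Sym2 (Fin k))}

def letterInv (α : Fin k × Bool) : Fin k × Bool := (α.1, !α.2)

@[simp] lemma letterInv_letterInv (α : Fin k × Bool) : letterInv (letterInv α) = α := by
  simp [letterInv]

lemma ne_letterInv_of_fst_ne {α β : Fin k × Bool} (h : α.1 ≠ β.1) : β ≠ letterInv α :=
  fun hb => h (congrArg Prod.fst hb).symm

@[simp] lemma sym_letterInv (α : Fin k × Bool) : sym k F (letterInv α) = (sym k F α)⁻¹ := by
  obtain ⟨i, b⟩ := α; cases b <;> simp [sym, letterInv]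

def LettersCommute (F : Set (Sym2 (Fin k))) (α β : Fin k × Bool) : Prop :=
  α.1 ≠ β.1 ∧ s(α.1, β.1) ∉ F

namespace LettersCommute

variable {α β : Fin k × Bool}

lemma symm (h : LettersCommute F α β) : LettersCommute F β α :=
  ⟨h.1.symm, by rw [Sym2.eq_swap]; exact h.2⟩

@[simp] lemma letterInv_left_iff : LettersCommute F (letterInv α) β ↔ LettersCommute F α β :=
  Iff.rfl

@[simp] lemma letterInv_right_iff : LettersCommute F α (letterInv β) ↔ LettersCommute F α β :=
  Iff.rfl

lemma ne_letterInv (h : LettersCommute F α β) : β ≠ letterInv α := ne_letterInv_of_fst_ne h.1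

lemma commute_sym (h : LettersCommute F α β) : Commute (sym k F α) (sym k F β) := by
  have hrel : (FreeGroup.of α.1 * FreeGroup.of β.1 * (FreeGroup.of α.1)⁻¹ *
      (FreeGroup.of β.1)⁻¹ : FreeGroup (Fin k)) ∈ Rels k F := ⟨α.1, β.1, h.1, h.2, rfl⟩
  have hgen : Commute (gen k F α.1) (gen k F β.1) := by
    have h1 := PresentedGroup.one_of_mem hrel
    simp only [map_mul, map_inv] at h1
    exact commutatorElement_eq_one_iff_commute.mp h1
  obtain ⟨i, b⟩ := α; obtain ⟨j, b'⟩ := β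
  cases b <;> cases b' <;> simp only [sym, Bool.false_eq_true, if_true, if_false]
  exacts [hgen.inv_inv, hgen.inv_left, hgen.inv_right, hgen]

end LettersCommute

def BraidStep (F : Set (Sym2 (Fin k))) (l l' : List (Fin k × Bool)) : Prop :=
  ∃ u v α β, LettersCommute F α β ∧ l = u ++ α :: β :: v ∧ l' = u ++ β :: α :: v

def Braid (F : Set (Sym2 (Fin k))) : List (Fin k × Bool) → List (Fin k × Bool) → Prop :=
  Relation.ReflTransGen (BraidStep F)

namespace Braid

@[refl] lemma refl (l : List (Fin k × Bool)) : Braid F l l := Relation.ReflTransGen.refl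

lemma trans {a b c : List (Fin k × Bool)} (h₁ : Braid F a b) (h₂ : Braid F b c) :
    Braid F a c :=
  Relation.ReflTransGen.trans h₁ h₂

lemma single {u v : List (Fin k × Bool)} {α β : Fin k × Bool} (hc : LettersCommute F α β) :
    Braid F (u ++ α :: β :: v) (u ++ β :: α :: v) :=
  Relation.ReflTransGen.single ⟨u, v, α, β, hc, rfl, rfl⟩

lemma symm {a b : List (Fin k × Bool)} (h : Braid F a b) : Braid F b a := by
  induction h with
  | refl => rfl
  | tail _ hs ih =>
      obtain ⟨u, v, α, β, hc, rfl, rfl⟩ := hs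
      exact (single hc.symm).trans ih

lemma swap_head {v : List (Fin k × Bool)} {α β : Fin k × Bool} (hc : LettersCommute F α β) :
    Braid F (α :: β :: v) (β :: α :: v) :=
  single (u := []) hc

lemma cons {t t' : List (Fin k × Bool)} (γ : Fin k × Bool) (h : Braid F t t') :
    Braid F (γ :: t) (γ :: t') := by
  refine Relation.ReflTransGen.lift (γ :: ·) ?_ _ _ h
  rintro a b ⟨u, v, α, β, hc, rfl, rfl⟩
  exact ⟨γ :: u, v, α, β, hc, rfl, rfl⟩

lemma length_eq {a b : List (Fin k × Bool)} (h : Braid F a b) : a.length = b.length := by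
  induction h with
  | refl => rfl
  | tail _ hs ih => obtain ⟨u, v, α, β, _, rfl, rfl⟩ := hs; simp [ih]

end Braid

@[simp] lemma wordProd_nil : wordProd k F [] = 1 := rfl

@[simp] lemma wordProd_cons (α : Fin k × Bool) (l : List (Fin k × Bool)) :
    wordProd k F (α :: l) = sym k F α * wordProd k F l := by
  simp [wordProd]

lemma wordProd_append (a b : List (Fin k × Bool)) :
    wordProd k F (a ++ b) = wordProd k F a * wordProd k F b := by
  simp [wordProd]

lemma wordProd_invRev (l : List (Fin k × Bool)) :
    wordProd k F (FreeGroup.invRev l) = (wordProd k F l)⁻¹ := by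
  induction l with
  | nil => simp [FreeGroup.invRev]
  | cons α t ih =>
      rw [FreeGroup.invRev_cons, wordProd_append, ih, wordProd_cons, mul_inv_rev,
        show FreeGroup.invRev [α] = [letterInv α] from rfl, wordProd_cons, wordProd_nil, mul_one,
        sym_letterInv]

lemma wordProd_surjective : Function.Surjective (wordProd k F) := by
  intro x
  induction x using PresentedGroup.induction_on with
  | H z =>
    induction z using FreeGroup.induction_on with
    | C1 => exact ⟨[], by rw [map_one]; rfl⟩
    | of i => exact ⟨[(i, true)], by simp [sym, gen]; rfl⟩
    | inv_of i _ => exact ⟨[(i, false)], by simp [sym, gen]; rfl⟩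
    | mul x y hx hy =>
        obtain ⟨lx, hlx⟩ := hx
        obtain ⟨ly, hly⟩ := hy
        exact ⟨lx ++ ly, by rw [wordProd_append, hlx, hly, map_mul]⟩

open Classical in
noncomputable def push (F : Set (Sym2 (Fin k))) (α : Fin k × Bool) :
    List (Fin k × Bool) → List (Fin k × Bool)
  | [] => [α]
  | β :: t =>
      if β = letterInv α then t else if LettersCommute F α β then β :: push F α t else α :: β :: t

@[simp] lemma push_nil (α : Fin k × Bool) : push F α [] = [α] := rfl

lemma push_cancel {α β : Fin k × Bool} (h : β = letterInv α) (t : List (Fin k × Bool)) :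
    push F α (β :: t) = t := by
  rw [push, if_pos h]

lemma push_commute {α β : Fin k × Bool} (h : LettersCommute F α β) (t : List (Fin k × Bool)) :
    push F α (β :: t) = β :: push F α t := by
  rw [push, if_neg h.ne_letterInv, if_pos h]

lemma push_block {α β : Fin k × Bool} (h₁ : β ≠ letterInv α) (h₂ : ¬ LettersCommute F α β)
    (t : List (Fin k × Bool)) : push F α (β :: t) = α :: β :: t := by
  rw [push, if_neg h₁, if_neg h₂]

/-- `push F α l` cancels a letter of `l`. -/
def Cancels (F : Set (Sym2 (Fin k))) (α : Fin k × Bool) : List (Fin k × Bool) → Prop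
  | [] => False
  | β :: t => β = letterInv α ∨ (LettersCommute F α β ∧ Cancels F α t)

@[simp] lemma not_cancels_nil (α : Fin k × Bool) : ¬ Cancels F α [] := id

@[simp] lemma cancels_cons (α β : Fin k × Bool) (t : List (Fin k × Bool)) :
    Cancels F α (β :: t) ↔ β = letterInv α ∨ (LettersCommute F α β ∧ Cancels F α t) := Iff.rfl

lemma cancels_append (α : Fin k × Bool) (a b : List (Fin k × Bool)) :
    Cancels F α (a ++ b) ↔ Cancels F α a ∨ ((∀ β ∈ a, LettersCommute F α β) ∧ Cancels F α b) := by
  induction a with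
  | nil => simp
  | cons γ a ih =>
      simp only [List.cons_append, cancels_cons, ih, List.forall_mem_cons]
      tauto

def Reduced (F : Set (Sym2 (Fin k))) : List (Fin k × Bool) → Prop
  | [] => True
  | β :: t => ¬ Cancels F β t ∧ Reduced F t

@[simp] lemma reduced_nil : Reduced F [] := trivial

@[simp] lemma reduced_cons (β : Fin k × Bool) (t : List (Fin k × Bool)) :
    Reduced F (β :: t) ↔ ¬ Cancels F β t ∧ Reduced F t := Iff.rfl

lemma wordProd_push (α : Fin k × Bool) (l : List (Fin k × Bool)) :
    wordProd k F (push F α l) = sym k F α * wordProd k F l := by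
  induction l with
  | nil => simp
  | cons β t ih =>
      by_cases h₁ : β = letterInv α
      · rw [push_cancel h₁, h₁]; simp
      by_cases h₂ : LettersCommute F α β
      · rw [push_commute h₂, wordProd_cons, ih, wordProd_cons, ← mul_assoc, ← mul_assoc,
          h₂.symm.commute_sym.eq]
      · rw [push_block h₁ h₂]; simp

lemma length_push_of_cancels {α : Fin k × Bool} {l : List (Fin k × Bool)}
    (h : Cancels F α l) : (push F α l).length + 1 = l.length := by
  induction l with
  | nil => exact absurd h (not_cancels_nil α)
  | cons β t ih =>
      rcases h with h | ⟨hc, hv⟩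
      · rw [push_cancel h]; rfl
      · rw [push_commute hc]; simpa using ih hv

lemma length_push_of_not_cancels {α : Fin k × Bool} {l : List (Fin k × Bool)}
    (h : ¬ Cancels F α l) : (push F α l).length = l.length + 1 := by
  induction l with
  | nil => simp
  | cons β t ih =>
      simp only [cancels_cons, not_or, not_and] at h
      by_cases hc : LettersCommute F α β
      · rw [push_commute hc]; simpa using ih (h.2 hc)
      · rw [push_block h.1 hc]; rfl

lemma length_push_le (α : Fin k × Bool) (l : List (Fin k × Bool)) :
    (push F α l).length ≤ l.length + 1 := by
  by_cases h : Cancels F α l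
  · have := length_push_of_cancels h; omega
  · rw [length_push_of_not_cancels h]

lemma Cancels.of_push {α β : Fin k × Bool} {t : List (Fin k × Bool)}
    (hc : LettersCommute F α β) (h : Cancels F β (push F α t)) : Cancels F β t := by
  induction t with
  | nil =>
      rcases h with h | ⟨_, h⟩
      · exact absurd h (ne_letterInv_of_fst_ne hc.1.symm)
      · exact absurd h (not_cancels_nil β)
  | cons γ s ih =>
      by_cases h₁ : γ = letterInv α
      · rw [push_cancel h₁] at h
        exact Or.inr ⟨h₁ ▸ LettersCommute.letterInv_right_iff.2 hc.symm, h⟩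
      by_cases h₂ : LettersCommute F α γ
      · rw [push_commute h₂] at h
        exact h.imp_right fun ⟨hc₂, h⟩ => ⟨hc₂, ih h⟩
      · rw [push_block h₁ h₂] at h
        rcases h with h | ⟨_, h⟩
        · exact absurd h (ne_letterInv_of_fst_ne hc.1.symm)
        · exact h

lemma Reduced.push {l : List (Fin k × Bool)} (h : Reduced F l) (α : Fin k × Bool) :
    Reduced F (push F α l) := by
  induction l with
  | nil => simp
  | cons β t ih =>
      obtain ⟨h₁, h₂⟩ := h
      by_cases hc₁ : β = letterInv α
      · rwa [push_cancel hc₁]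
      by_cases hc₂ : LettersCommute F α β
      · rw [push_commute hc₂]
        exact ⟨fun hv => h₁ (hv.of_push hc₂), ih h₂⟩
      · rw [push_block hc₁ hc₂]
        exact ⟨by simp [hc₁, hc₂], h₁, h₂⟩

lemma braid_push_of_not_cancels {α : Fin k × Bool} {l : List (Fin k × Bool)}
    (h : ¬ Cancels F α l) : Braid F (push F α l) (α :: l) := by
  induction l with
  | nil => rfl
  | cons β t ih =>
      simp only [cancels_cons, not_or, not_and] at h
      by_cases hc : LettersCommute F α β
      · rw [push_commute hc]
        exact (Braid.cons β (ih (h.2 hc))).trans (Braid.swap_head hc.symm)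
      · rw [push_block h.1 hc]

lemma braid_push_letterInv_push {l : List (Fin k × Bool)} (h : Reduced F l)
    (α : Fin k × Bool) : Braid F (push F (letterInv α) (push F α l)) l := by
  induction l with
  | nil => rw [push_nil, push_cancel (letterInv_letterInv α).symm]
  | cons β t ih =>
      obtain ⟨h₁, h₂⟩ := h
      by_cases hc₁ : β = letterInv α
      · subst hc₁
        rw [push_cancel rfl]
        exact braid_push_of_not_cancels h₁
      by_cases hc₂ : LettersCommute F α β
      · rw [push_commute hc₂, push_commute (LettersCommute.letterInv_left_iff.2 hc₂)]
        exact Braid.cons β (ih h₂)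
      · rw [push_block hc₁ hc₂, push_cancel (letterInv_letterInv α).symm]

lemma braid_push_single {α β γ : Fin k × Bool} (hc : LettersCommute F β γ)
    (u v : List (Fin k × Bool)) :
    Braid F (push F α (u ++ β :: γ :: v)) (push F α (u ++ γ :: β :: v)) := by
  induction u with
  | cons δ u ih =>
      simp only [List.cons_append]
      by_cases h₁ : δ = letterInv α
      · rw [push_cancel h₁, push_cancel h₁]
        exact Braid.single hc
      by_cases h₂ : LettersCommute F α δ
      · rw [push_commute h₂, push_commute h₂]
        exact Braid.cons δ ih
      · rw [push_block h₁ h₂, push_block h₁ h₂]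
        exact Braid.cons α (Braid.cons δ (Braid.single hc))
  | nil =>
      simp only [List.nil_append]
      by_cases h₁ : β = letterInv α
      · subst h₁
        rw [push_cancel rfl, push_commute (LettersCommute.letterInv_left_iff.1 hc),
          push_cancel rfl]
      by_cases h₂ : γ = letterInv α
      · subst h₂
        rw [push_commute (LettersCommute.letterInv_right_iff.1 hc).symm, push_cancel rfl,
          push_cancel rfl]
      by_cases h₃ : LettersCommute F α β <;> by_cases h₄ : LettersCommute F α γ
      · rw [push_commute h₃, push_commute h₄, push_commute h₄, push_commute h₃]
        exact Braid.swap_head hc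
      · rw [push_commute h₃, push_block h₂ h₄, push_block h₂ h₄]
        exact (Braid.swap_head h₃.symm).trans (Braid.cons α (Braid.swap_head hc))
      · rw [push_block h₁ h₃, push_commute h₄, push_block h₁ h₃]
        exact (Braid.cons α (Braid.swap_head hc)).trans (Braid.swap_head h₄)
      · rw [push_block h₁ h₃, push_block h₂ h₄]
        exact Braid.cons α (Braid.swap_head hc)

lemma Braid.push {l l' : List (Fin k × Bool)} (α : Fin k × Bool) (h : Braid F l l') :
    Braid F (push F α l) (push F α l') := by
  induction h with
  | refl => rfl
  | tail _ hs ih =>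
      obtain ⟨u, v, β, γ, hc, rfl, rfl⟩ := hs
      exact ih.trans (braid_push_single hc u v)

lemma LettersCommute.braid_push_push {α β : Fin k × Bool} (hc : LettersCommute F α β)
    (l : List (Fin k × Bool)) :
    Braid F (push F α (push F β l)) (push F β (push F α l)) := by
  induction l with
  | nil =>
      rw [push_nil, push_nil, push_commute hc.symm, push_commute hc, push_nil, push_nil]
      exact Braid.swap_head hc.symm
  | cons γ t ih =>
      by_cases h₁ : γ = letterInv β
      · subst h₁
        rw [push_cancel rfl, push_commute (LettersCommute.letterInv_right_iff.2 hc),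
          push_cancel rfl]
      by_cases h₂ : γ = letterInv α
      · subst h₂
        rw [push_cancel rfl, push_commute (LettersCommute.letterInv_right_iff.2 hc.symm),
          push_cancel rfl]
      by_cases h₃ : LettersCommute F β γ <;> by_cases h₄ : LettersCommute F α γ
      · rw [push_commute h₃, push_commute h₄, push_commute h₄, push_commute h₃]
        exact Braid.cons γ ih
      · rw [push_commute h₃, push_block h₂ h₄, push_block h₂ h₄, push_commute hc.symm,
          push_commute h₃]
      · rw [push_block h₁ h₃, push_commute h₄, push_commute hc, push_commute h₄,
          push_block h₁ h₃]
      · rw [push_block h₁ h₃, push_commute hc, push_block h₂ h₄, push_commute hc.symm,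
          push_block h₁ h₃]
        exact Braid.swap_head hc.symm

noncomputable def reduce (F : Set (Sym2 (Fin k))) (l : List (Fin k × Bool)) :
    List (Fin k × Bool) :=
  l.foldr (push F) []

@[simp] lemma reduce_cons (α : Fin k × Bool) (l : List (Fin k × Bool)) :
    reduce F (α :: l) = push F α (reduce F l) := rfl

lemma reduced_reduce (l : List (Fin k × Bool)) : Reduced F (reduce F l) := by
  induction l with
  | nil => trivial
  | cons α t ih => exact ih.push α

lemma wordProd_reduce (l : List (Fin k × Bool)) :
    wordProd k F (reduce F l) = wordProd k F l := by
  induction l with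
  | nil => rfl
  | cons α t ih => rw [reduce_cons, wordProd_push, ih, wordProd_cons]

lemma length_reduce_le (l : List (Fin k × Bool)) : (reduce F l).length ≤ l.length := by
  induction l with
  | nil => exact le_rfl
  | cons α t ih => exact (length_push_le α _).trans (Nat.succ_le_succ ih)

lemma Reduced.braid_reduce {l : List (Fin k × Bool)} (h : Reduced F l) :
    Braid F (reduce F l) l := by
  induction l with
  | nil => rfl
  | cons α t ih => exact (ih h.2).push α |>.trans (braid_push_of_not_cancels h.1)

instance braidSetoid (F : Set (Sym2 (Fin k))) :
    Setoid {l : List (Fin k × Bool) // Reduced F l} where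
  r a b := Braid F a.1 b.1
  iseqv := ⟨fun _ => Braid.refl _, Braid.symm, Braid.trans⟩

def NormalForm (F : Set (Sym2 (Fin k))) := Quotient (braidSetoid F)

noncomputable def letterPerm (F : Set (Sym2 (Fin k))) (α : Fin k × Bool) :
    Equiv.Perm (NormalForm F) where
  toFun := Quotient.map (fun r => ⟨push F α r.1, r.2.push α⟩) fun _ _ h => h.push α
  invFun := Quotient.map (fun r => ⟨push F (letterInv α) r.1, r.2.push _⟩) fun _ _ h => h.push _
  left_inv := by
    rintro ⟨r⟩
    exact Quotient.sound (braid_push_letterInv_push r.2 α)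
  right_inv := by
    rintro ⟨r⟩
    have h := braid_push_letterInv_push r.2 (letterInv α)
    rw [letterInv_letterInv] at h
    exact Quotient.sound h

lemma LettersCommute.commute_letterPerm {α β : Fin k × Bool} (hc : LettersCommute F α β) :
    Commute (letterPerm F α) (letterPerm F β) := by
  ext ⟨r⟩
  exact Quotient.sound (hc.braid_push_push r.1)

noncomputable def normalFormAction : Grp k F →* Equiv.Perm (NormalForm F) :=
  PresentedGroup.toGroup (f := fun i => letterPerm F (i, true)) fun _ ⟨i, j, hij, hF, hr⟩ => by
    subst hr
    simp only [map_mul, map_inv, FreeGroup.lift_apply_of]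
    exact commutatorElement_eq_one_iff_commute.mpr
      (LettersCommute.commute_letterPerm (F := F) ⟨hij, hF⟩)

lemma normalFormAction_sym (α : Fin k × Bool) :
    normalFormAction (sym k F α) = letterPerm F α := by
  obtain ⟨i, b⟩ := α
  cases b
  · show (normalFormAction (gen k F i))⁻¹ = _
    rw [show normalFormAction (gen k F i) = letterPerm F (i, true) from
      PresentedGroup.toGroup.of _]
    rfl
  · exact PresentedGroup.toGroup.of _

noncomputable def normalForm (x : Grp k F) : NormalForm F :=
  normalFormAction x ⟦⟨[], reduced_nil⟩⟧

lemma normalForm_wordProd (l : List (Fin k × Bool)) :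
    normalForm (wordProd k F l) = ⟦⟨reduce F l, reduced_reduce l⟩⟧ := by
  induction l with
  | nil => exact congrFun (congrArg DFunLike.coe (map_one normalFormAction)) _
  | cons α t ih =>
      rw [normalForm, wordProd_cons, map_mul]
      show normalFormAction (sym k F α) (normalForm (wordProd k F t)) = _
      rw [ih, normalFormAction_sym]
      rfl

theorem Reduced.braid_of_wordProd_eq {l l' : List (Fin k × Bool)} (hl : Reduced F l)
    (hl' : Reduced F l') (h : wordProd k F l = wordProd k F l') : Braid F l l' := by
  have hnf : Braid F (reduce F l) (reduce F l') :=
    Quotient.exact ((normalForm_wordProd l).symm.trans (h ▸ normalForm_wordProd l'))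
  exact hl.braid_reduce.symm.trans (hnf.trans hl'.braid_reduce)

lemma len_wordProd_le (l : List (Fin k × Bool)) : len (wordProd k F l) ≤ l.length :=
  Nat.sInf_le ⟨l, rfl, rfl⟩

lemma Reduced.len_wordProd {l : List (Fin k × Bool)} (h : Reduced F l) :
    len (wordProd k F l) = l.length := by
  obtain ⟨w, hw, hlen⟩ := Nat.sInf_mem
    (⟨l.length, l, rfl, rfl⟩ : {n | ∃ w, wordProd k F w = wordProd k F l ∧ w.length = n}.Nonempty)
  -- a shortest word `w` for the element reduces to a braid-equivalent of `l`
  have hbr : Braid F (reduce F w) l :=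
    (reduced_reduce w).braid_of_wordProd_eq h (by rw [wordProd_reduce, hw])
  refine le_antisymm (len_wordProd_le l) ?_
  rw [len, ← hlen, ← hbr.length_eq]
  exact length_reduce_le w

lemma exists_reduced_word (x : Grp k F) :
    ∃ l, Reduced F l ∧ wordProd k F l = x ∧ l.length = len x := by
  obtain ⟨l, rfl⟩ := wordProd_surjective x
  refine ⟨reduce F l, reduced_reduce l, wordProd_reduce l, ?_⟩
  rw [← (reduced_reduce l).len_wordProd, wordProd_reduce]

@[simp] lemma len_one : len (1 : Grp k F) = 0 :=
  Nat.eq_zero_of_le_zero (len_wordProd_le (F := F) [])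

lemma len_sym_le (α : Fin k × Bool) : len (sym k F α) ≤ 1 := by
  simpa using len_wordProd_le (F := F) [α]

lemma len_mul_le (x y : Grp k F) : len (x * y) ≤ len x + len y := by
  obtain ⟨u, -, rfl, hu⟩ := exists_reduced_word x
  obtain ⟨v, -, rfl, hv⟩ := exists_reduced_word y
  rw [← wordProd_append, ← hu, ← hv, ← List.length_append]
  exact len_wordProd_le _

lemma len_inv_le (x : Grp k F) : len x⁻¹ ≤ len x := by
  obtain ⟨u, -, rfl, hu⟩ := exists_reduced_word x
  rw [← wordProd_invRev, ← hu, ← FreeGroup.invRev_length]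
  exact len_wordProd_le _

@[simp] lemma len_inv (x : Grp k F) : len x⁻¹ = len x :=
  le_antisymm (len_inv_le x) (by simpa using len_inv_le x⁻¹)

lemma reduced_of_len_eq {l : List (Fin k × Bool)} (h : len (wordProd k F l) = l.length) :
    Reduced F l := by
  induction l with
  | nil => trivial
  | cons γ t ih =>
      have hsym := len_sym_le (F := F) γ
      have hmul := len_mul_le (sym k F γ) (wordProd k F t)
      have ht := len_wordProd_le (F := F) t
      rw [wordProd_cons, List.length_cons] at h
      refine ⟨fun hc => ?_, ih (by omega)⟩
      have hpush := len_wordProd_le (F := F) (push F γ t)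
      rw [wordProd_push] at hpush
      have := length_push_of_cancels hc
      omega

lemma Reduced.invRev {l : List (Fin k × Bool)} (h : Reduced F l) :
    Reduced F (FreeGroup.invRev l) :=
  reduced_of_len_eq (by rw [wordProd_invRev, len_inv, h.len_wordProd, FreeGroup.invRev_length])

lemma Reduced.append {a b : List (Fin k × Bool)} (ha : Reduced F a) (hb : Reduced F b)
    (hab : ∀ γ p q, a = p ++ γ :: q → (∀ β ∈ q, LettersCommute F γ β) → ¬ Cancels F γ b) :
    Reduced F (a ++ b) := by
  induction a with
  | nil => simpa using hb
  | cons γ a ih =>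
      refine ⟨?_, ih ha.2 fun γ' p q hp hq => hab γ' (γ :: p) q (by rw [hp]; rfl) hq⟩
      show ¬ Cancels F γ (a ++ b)
      rw [cancels_append]
      rintro (hc | ⟨hall, hcb⟩)
      · exact ha.1 hc
      · exact hab γ [] a rfl hall hcb

/-- The letter `α` can stand first in a shortest word for `x`. -/
def StartsWith (α : Fin k × Bool) (x : Grp k F) : Prop :=
  len ((sym k F α)⁻¹ * x) + 1 = len x

lemma Reduced.startsWith_iff {l : List (Fin k × Bool)} (hl : Reduced F l) (α : Fin k × Bool) :
    StartsWith α (wordProd k F l) ↔ Cancels F (letterInv α) l := by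
  rw [StartsWith, ← sym_letterInv, ← wordProd_push, (hl.push _).len_wordProd, hl.len_wordProd]
  refine ⟨fun h => ?_, length_push_of_cancels⟩
  by_contra hc
  have := length_push_of_not_cancels hc
  omega

lemma len_inv_mul_of_not_startsWith {x y : Grp k F}
    (h : ∀ α, ¬ (StartsWith α x ∧ StartsWith α y)) : len (x⁻¹ * y) = len x + len y := by
  obtain ⟨u, hu, rfl, -⟩ := exists_reduced_word x
  obtain ⟨v, hv, rfl, -⟩ := exists_reduced_word y
  suffices hred : Reduced F (FreeGroup.invRev u ++ v) by
    rw [← wordProd_invRev, ← wordProd_append, hred.len_wordProd, List.length_append,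
      FreeGroup.invRev_length, hu.len_wordProd, hv.len_wordProd]
  refine hu.invRev.append hv fun γ p q hsplit hq hcv => h (letterInv γ) ⟨?_, ?_⟩
  · rw [hu.startsWith_iff, letterInv_letterInv,
      ← FreeGroup.invRev_invRev (L₁ := u), hsplit, FreeGroup.invRev_append, FreeGroup.invRev_cons,
      cancels_append, cancels_append]
    refine Or.inl (Or.inr ⟨?_, Or.inl rfl⟩)
    simp only [FreeGroup.invRev, List.mem_reverse, List.mem_map]
    rintro _ ⟨β, hβ, rfl⟩
    exact hq β hβ
  · rwa [hv.startsWith_iff, letterInv_letterInv]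

lemma dist_self (x : Grp k F) : dist x x = 0 := by
  simp [dist]

lemma dist_comm (x y : Grp k F) : dist x y = dist y x := by
  rw [dist, dist, ← len_inv, mul_inv_rev, inv_inv]

lemma dist_triangle (x y z : Grp k F) : dist x z ≤ dist x y + dist y z := by
  simpa [dist, mul_assoc] using len_mul_le (x⁻¹ * y) (y⁻¹ * z)

lemma dist_mul_sym_le (x : Grp k F) (α : Fin k × Bool) : dist x (x * sym k F α) ≤ 1 := by
  simpa [dist] using len_sym_le (F := F) α

lemma StartsWith.dist_mul_sym {α : Fin k × Bool} {a b : Grp k F} (h : StartsWith α (a⁻¹ * b)) :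
    dist (a * sym k F α) b + 1 = dist a b := by
  rw [dist, dist, mul_inv_rev, mul_assoc]
  exact h

theorem exists_median (a b c : Grp k F) : ∃ m, dist a m + dist m b = dist a b ∧
    dist a m + dist m c = dist a c ∧ dist b m + dist m c = dist b c := by
  induction hn : dist a b + dist a c using Nat.strong_induction_on generalizing a with
  | _ n ih =>
  by_cases hfirst : ∃ α, StartsWith α (a⁻¹ * b) ∧ StartsWith α (a⁻¹ * c)
  · obtain ⟨α, hb, hc⟩ := hfirst
    have hb := hb.dist_mul_sym
    have hc := hc.dist_mul_sym
    obtain ⟨m, hmb, hmc, hbc⟩ := ih _ (by omega) (a * sym k F α) rfl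
    have := dist_mul_sym_le a α
    have := dist_triangle a (a * sym k F α) m
    have := dist_triangle a m b
    have := dist_triangle a m c
    exact ⟨m, by omega, by omega, hbc⟩
  · refine ⟨a, by rw [dist_self, zero_add], by rw [dist_self, zero_add], ?_⟩
    have := len_inv_mul_of_not_startsWith (x := a⁻¹ * b) (y := a⁻¹ * c)
      fun α h => hfirst ⟨α, h⟩
    rw [dist_comm b a]
    simpa [dist, mul_assoc] using this.symm

end

theorem stmt7_general {k : ℕ} {F : Set (Sym2 (Fin k))}
    (L₁ L₂ L₃ : Set (Grp k F))
    (h1 : ConvexSet L₁) (h2 : ConvexSet L₂) (h3 : ConvexSet L₃)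
    (h12 : (L₁ ∩ L₂).Nonempty) (h13 : (L₁ ∩ L₃).Nonempty)
    (h23 : (L₂ ∩ L₃).Nonempty) :
    (L₁ ∩ L₂ ∩ L₃).Nonempty := by
  obtain ⟨a, ha₁, ha₂⟩ := h12
  obtain ⟨b, hb₁, hb₃⟩ := h13
  obtain ⟨c, hc₂, hc₃⟩ := h23
  obtain ⟨m, hab, hac, hbc⟩ := exists_median a b c
  exact ⟨m, ⟨h1.2 a b m ha₁ hb₁ hab, h2.2 a c m ha₂ hc₂ hac⟩, h3.2 b c m hb₃ hc₃ hbc⟩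

/-- Helly property: pairwise intersecting convex sets have a
common element. -/
theorem stmt7 {k : ℕ} (hk : 1 ≤ k) {F : Set (Sym2 (Fin k))}
    (L₁ L₂ L₃ : Set (Grp k F))
    (h1 : ConvexSet L₁) (h2 : ConvexSet L₂) (h3 : ConvexSet L₃)
    (h12 : (L₁ ∩ L₂).Nonempty) (h13 : (L₁ ∩ L₃).Nonempty)
    (h23 : (L₂ ∩ L₃).Nonempty) :
    (L₁ ∩ L₂ ∩ L₃).Nonempty :=
  stmt7_general L₁ L₂ L₃ h1 h2 h3 h12 h13 h23

end GraphGroupPaper
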